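/- Let f : ℝ^d → ℝ be twice continuously differentiable with L1-Lipschitz gradient and L2-Lipschitz Hessian, let α ∈ (0,1], ε₁ ∈ (0,1), ε₂ = ε₁^α, and let x₀ satisfy f(x₀) − inf f ≤ Δ < ∞. Suppose x₁ = x₀ and (v_j) are unit vectors such that for every j: (i) λ_min(∇²f(x_j)) ≥ v_jᵀ∇²f(x_j)v_j − max(ε₂, ‖∇f(x_j)‖^{2/3})/2 and v_jᵀ∇²f(x_j)v_j ≤ 0; (ii) x_{j+1} = x_j − (2·|v_jᵀ∇²f(x_j)v_j|/L2)·sign(v_jᵀ∇f(x_j))·v_j if 2·|v_jᵀ∇²f(x_j)v_j|³/(3·L2²) > ‖∇f(x_j)‖²/(2·L1), and x_{j+1} = x_j − (1/L1)·∇f(x_j) otherwise. Then the first index j* with v_{j*}ᵀ∇²f(x_{j*})v_{j*} > −ε₂/2 and ‖∇f(x_{j*})‖ ≤ ε₁^{3α/2} satisfies j* ≤ 1 + (max(12·L2², 2·L1)/ε₁^{3α})·(f(x₁) − f(x_{j*})) ≤ 1 + (max(12·L2², 2·L1)/ε₁^{3α})·Δ, and at termination λ_min(∇²f(x_{j*}))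 ≥ −ε₂. -/

import Mathlib

/-!
Each iteration of NCG-A2 decreases `f` by the larger of the guaranteed decreases of its two
candidate steps: `‖∇f‖² / (2 L₁)` for the gradient step (descent lemma) and `2 |λ|³ / (3 L₂²)`
for the step of length `2 |λ| / L₂` along `±v`, where `λ = vᵀ ∇²f v` (cubic upper model from the
Lipschitz Hessian). Before termination `λ ≤ -ε₂ / 2` or `‖∇f‖ > ε₁^{3α/2}`, so every step gains at
least `ε₁^{3α} / max (12 L₂²) (2 L₁)`; since `f` can drop by at most `Δ`, termination comes within
the stated number of steps. At termination `‖∇f‖^{2/3} ≤ ε₂`, so the approximate-eigenvector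
hypothesis gives `λ_min ≥ λ - ε₂ / 2 > -ε₂`.
-/

open scoped RealInnerProductSpace
open Set

noncomputable def sgn (t : ℝ) : ℝ := if 0 ≤ t then 1 else -1

lemma sgn_mul_self (t : ℝ) : sgn t * t = |t| := by
  unfold sgn
  split_ifs with ht
  · rw [one_mul, abs_of_nonneg ht]
  · rw [abs_of_neg (not_le.1 ht), neg_one_mul]

lemma abs_sgn (t : ℝ) : |sgn t| = 1 := by
  unfold sgn
  split_ifs <;> norm_num

lemma norm_image_one_le_of_norm_deriv_le_mul_pow {G : Type*} [NormedAddCommGroup G]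
    [NormedSpace ℝ G] {F F' : ℝ → G} {C : ℝ} (n : ℕ) (h0 : F 0 = 0)
    (hF : ∀ t, HasDerivAt F (F' t) t) (hbound : ∀ t ∈ Ico (0 : ℝ) 1, ‖F' t‖ ≤ C * t ^ n) :
    ‖F 1‖ ≤ C / (n + 1) := by
  have hB (t : ℝ) : HasDerivAt (fun s : ℝ => C * s ^ (n + 1) / (n + 1)) (C * t ^ n) t := by
    refine (((hasDerivAt_pow (n + 1) t).const_mul C).div_const ((n : ℝ) + 1)).congr_deriv ?_
    rw [Nat.add_sub_cancel]
    push_cast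
    field_simp
  simpa using image_norm_le_of_norm_deriv_right_le_deriv_boundary
    (fun t _ => (hF t).continuousAt.continuousWithinAt) (fun t _ => (hF t).hasDerivWithinAt)
    (by simp [h0]) hB hbound (right_mem_Icc.2 zero_le_one)

section NormedSpace

variable {E G : Type*} [NormedAddCommGroup E] [NormedSpace ℝ E] [NormedAddCommGroup G]
  [NormedSpace ℝ G]

lemma hasDerivAt_comp_add_smul {g : E → G} {x h : E} {t : ℝ}
    (hg : DifferentiableAt ℝ g (x + t • h)) :
    HasDerivAt (fun s : ℝ => g (x + s • h)) (fderiv ℝ g (x + t • h) h) t := by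
  have hline : HasDerivAt (fun s : ℝ => x + s • h) h t := by
    simpa using ((hasDerivAt_id t).smul_const h).const_add x
  exact hg.hasFDerivAt.comp_hasDerivAt t hline

lemma norm_image_add_sub_sub_fderiv_le {g : E → G} {L : ℝ} (hg : Differentiable ℝ g)
    (hL : ∀ a b, ‖fderiv ℝ g a - fderiv ℝ g b‖ ≤ L * ‖a - b‖) (x h : E) :
    ‖g (x + h) - g x - fderiv ℝ g x h‖ ≤ L / 2 * ‖h‖ ^ 2 := by
  have hderiv (t : ℝ) : HasDerivAt (fun s : ℝ => g (x + s • h) - g x - s • fderiv ℝ g x h)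
      ((fderiv ℝ g (x + t • h) - fderiv ℝ g x) h) t := by
    refine (((hasDerivAt_comp_add_smul (hg _)).sub_const (g x)).sub
      ((hasDerivAt_id t).smul_const (fderiv ℝ g x h))).congr_deriv ?_
    rw [one_smul, sub_apply]
  have hbound (t : ℝ) (ht : t ∈ Ico (0 : ℝ) 1) :
      ‖(fderiv ℝ g (x + t • h) - fderiv ℝ g x) h‖ ≤ L * ‖h‖ ^ 2 * t ^ 1 :=
    calc ‖(fderiv ℝ g (x + t • h) - fderiv ℝ g x) h‖
        ≤ ‖fderiv ℝ g (x + t • h) - fderiv ℝ g x‖ * ‖h‖ := ContinuousLinearMap.le_opNorm _ _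
      _ ≤ L * ‖t • h‖ * ‖h‖ := by gcongr; simpa using hL (x + t • h) x
      _ = L * ‖h‖ ^ 2 * t ^ 1 := by rw [norm_smul, Real.norm_of_nonneg ht.1]; ring
  have := norm_image_one_le_of_norm_deriv_le_mul_pow 1 (by simp) hderiv hbound
  simp only [one_smul] at this
  linarith
  
end NormedSpace

section InnerProductSpace

variable {E : Type*} [NormedAddCommGroup E] [InnerProductSpace ℝ E] [CompleteSpace E]

lemma ContDiff.gradient {f : E → ℝ} {m n : WithTop ℕ∞} (hf : ContDiff ℝ n f) (hmn : m + 1 ≤ n) :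
    ContDiff ℝ m (gradient f) :=
  (InnerProductSpace.toDual ℝ E).symm.contDiff.comp (hf.fderiv_right hmn)

lemma norm_fderiv_sub_fderiv_eq_norm_gradient_sub (f : E → ℝ) (a b : E) :
    ‖fderiv ℝ f a - fderiv ℝ f b‖ = ‖gradient f a - gradient f b‖ := by
  rw [← toDual_gradient, ← toDual_gradient, ← map_sub, LinearIsometryEquiv.norm_map]

lemma apply_add_le_of_lipschitz_gradient {f : E → ℝ} {L : ℝ} (hf : Differentiable ℝ f)
    (hL : ∀ a b, ‖gradient f a - gradient f b‖ ≤ L * ‖a - b‖) (x h : E) :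
    f (x + h) ≤ f x + ⟪gradient f x, h⟫ + L / 2 * ‖h‖ ^ 2 := by
  have := norm_image_add_sub_sub_fderiv_le hf
    (fun a b => (norm_fderiv_sub_fderiv_eq_norm_gradient_sub f a b).trans_le (hL a b)) x h
  rw [Real.norm_eq_abs, ← inner_gradient_left] at this
  linarith [le_abs_self (f (x + h) - f x - ⟪gradient f x, h⟫)]

lemma apply_add_le_of_lipschitz_hessian {f : E → ℝ} {L : ℝ} (hf : Differentiable ℝ f)
    (hg : Differentiable ℝ (gradient f))
    (hL : ∀ a b, ‖fderiv ℝ (gradient f) a - fderiv ℝ (gradient f) b‖ ≤ L * ‖a - b‖) (x h : E) :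
    f (x + h) ≤ f x + ⟪gradient f x, h⟫ + 1 / 2 * ⟪fderiv ℝ (gradient f) x h, h⟫ +
      L / 6 * ‖h‖ ^ 3 := by
  set H := fderiv ℝ (gradient f) x
  have hderiv (t : ℝ) : HasDerivAt
      (fun s : ℝ => f (x + s • h) - f x - s * ⟪gradient f x, h⟫ - s ^ 2 / 2 * ⟪H h, h⟫)
      ⟪gradient f (x + t • h) - gradient f x - H (t • h), h⟫ t := by
    have hquad : HasDerivAt (fun s : ℝ => s ^ 2 / 2 * ⟪H h, h⟫) (t * ⟪H h, h⟫) t := by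
      refine (((hasDerivAt_pow 2 t).div_const 2).mul_const ⟪H h, h⟫).congr_deriv ?_
      norm_num
    refine ((((hasDerivAt_comp_add_smul (hf _)).sub_const (f x)).sub
      ((hasDerivAt_id t).mul_const ⟪gradient f x, h⟫)).sub hquad).congr_deriv ?_
    rw [inner_sub_left, inner_sub_left, map_smul, real_inner_smul_left, inner_gradient_left]
    simp
  have hbound (t : ℝ) (ht : t ∈ Ico (0 : ℝ) 1) :
      ‖⟪gradient f (x + t • h) - gradient f x - H (t • h), h⟫‖ ≤ L / 2 * ‖h‖ ^ 3 * t ^ 2 :=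
    calc ‖⟪gradient f (x + t • h) - gradient f x - H (t • h), h⟫‖
        ≤ ‖gradient f (x + t • h) - gradient f x - H (t • h)‖ * ‖h‖ := norm_inner_le_norm _ _
      _ ≤ L / 2 * ‖t • h‖ ^ 2 * ‖h‖ := by gcongr; exact norm_image_add_sub_sub_fderiv_le hg hL x _
      _ = L / 2 * ‖h‖ ^ 3 * t ^ 2 := by rw [norm_smul, Real.norm_of_nonneg ht.1]; ring
  have := norm_image_one_le_of_norm_deriv_le_mul_pow 2 (by simp) hderiv hbound
  rw [Real.norm_eq_abs] at this
  norm_num at this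
  rw [← inner_gradient_left] at this
  linarith [le_abs_self (f (x + h) - f x - ⟪gradient f x, h⟫ - 1 / 2 * ⟪H h, h⟫)]

lemma apply_sub_one_div_smul_gradient_le {f : E → ℝ} {L : ℝ} (hL : 0 < L) (hf : Differentiable ℝ f)
    (hlip : ∀ a b, ‖gradient f a - gradient f b‖ ≤ L * ‖a - b‖) (x : E) :
    f (x - (1 / L) • gradient f x) ≤ f x - ‖gradient f x‖ ^ 2 / (2 * L) := by
  have := apply_add_le_of_lipschitz_gradient hf hlip x (-((1 / L) • gradient f x))
  rw [← sub_eq_add_neg, inner_neg_right, real_inner_smul_right, real_inner_self_eq_norm_sq,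
    norm_neg, norm_smul, Real.norm_of_nonneg (by positivity)] at this
  calc _ ≤ _ := this
    _ = f x - ‖gradient f x‖ ^ 2 / (2 * L) := by field_simp; ring

lemma apply_sub_curvature_step_le {f : E → ℝ} {L : ℝ} (hL : 0 < L) (hf : Differentiable ℝ f)
    (hg : Differentiable ℝ (gradient f))
    (hlip : ∀ a b, ‖fderiv ℝ (gradient f) a - fderiv ℝ (gradient f) b‖ ≤ L * ‖a - b‖)
    {x v : E} (hv : ‖v‖ = 1) (hneg : ⟪fderiv ℝ (gradient f) x v, v⟫ ≤ 0) :
    f (x - ((2 * |⟪fderiv ℝ (gradient f) x v, v⟫| / L) * sgn ⟪gradient f x, v⟫) • v) ≤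
      f x - 2 * |⟪fderiv ℝ (gradient f) x v, v⟫| ^ 3 / (3 * L ^ 2) := by
  -- The sign makes the first-order term nonpositive; the length `r = 2 |λ| / L` minimises the
  -- rest of the cubic model, `-|λ| r² / 2 + L r³ / 6`.
  set lam := ⟪fderiv ℝ (gradient f) x v, v⟫
  set r := 2 * |lam| / L
  set c := r * sgn ⟪gradient f x, v⟫
  have hr : 0 ≤ r := by positivity
  have := apply_add_le_of_lipschitz_hessian hf hg hlip x (-(c • v))
  rw [← sub_eq_add_neg, inner_neg_right, real_inner_smul_right, map_neg, inner_neg_neg, map_smul,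
    real_inner_smul_left, real_inner_smul_right, norm_neg, norm_smul, hv] at this
  have hfirst : 0 ≤ c * ⟪gradient f x, v⟫ := by
    rw [mul_assoc, sgn_mul_self]
    positivity
  have hnorm : ‖c‖ = r := by rw [Real.norm_eq_abs, abs_mul, abs_sgn, mul_one, abs_of_nonneg hr]
  have hsq : c * c = r ^ 2 := by rw [← sq, ← sq_abs, ← Real.norm_eq_abs, hnorm]
  have hlam : r ^ 2 * lam = -(r ^ 2 * |lam|) := by rw [abs_of_nonpos hneg]; ring
  calc _ ≤ _ := this
    _ ≤ f x + 1 / 2 * (r ^ 2 * lam) + L / 6 * r ^ 3 := by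
        rw [← mul_assoc c c, hsq, hnorm, mul_one]; linarith
    _ = f x - 2 * |lam| ^ 3 / (3 * L ^ 2) := by
        rw [hlam]; simp only [r]; field_simp; ring

noncomputable def ncgA2Step (f : E → ℝ) (L1 L2 : ℝ) (x v : E) : E :=
  if 2 * |⟪fderiv ℝ (gradient f) x v, v⟫| ^ 3 / (3 * L2 ^ 2) > ‖gradient f x‖ ^ 2 / (2 * L1) then
    x - ((2 * |⟪fderiv ℝ (gradient f) x v, v⟫| / L2) * sgn ⟪gradient f x, v⟫) • v
  else
    x - (1 / L1) • gradient f x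

lemma apply_ncgA2Step_le {f : E → ℝ} {L1 L2 : ℝ} (hL1 : 0 < L1) (hL2 : 0 < L2)
    (hf : Differentiable ℝ f) (hg : Differentiable ℝ (gradient f))
    (hglip : ∀ a b, ‖gradient f a - gradient f b‖ ≤ L1 * ‖a - b‖)
    (hHlip : ∀ a b, ‖fderiv ℝ (gradient f) a - fderiv ℝ (gradient f) b‖ ≤ L2 * ‖a - b‖)
    {x v : E} (hv : ‖v‖ = 1) (hneg : ⟪fderiv ℝ (gradient f) x v, v⟫ ≤ 0) :
    f (ncgA2Step f L1 L2 x v) ≤ f x -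
      max (2 * |⟪fderiv ℝ (gradient f) x v, v⟫| ^ 3 / (3 * L2 ^ 2))
        (‖gradient f x‖ ^ 2 / (2 * L1)) := by
  unfold ncgA2Step
  split_ifs with hcurv
  · rw [max_eq_left hcurv.le]
    exact apply_sub_curvature_step_le hL2 hf hg hHlip hv hneg
  · rw [max_eq_right (not_lt.1 hcurv)]
    exact apply_sub_one_div_smul_gradient_le hL1 hf hglip x

end InnerProductSpace

lemma div_max_le_max_of_le_or_le {L1 L2 c lam g : ℝ} (hL1 : 0 < L1) (hL2 : 0 < L2) (hc : 0 ≤ c)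
    (h : c ≤ 8 * |lam| ^ 3 ∨ c ≤ g ^ 2) :
    c / max (12 * L2 ^ 2) (2 * L1) ≤ max (2 * |lam| ^ 3 / (3 * L2 ^ 2)) (g ^ 2 / (2 * L1)) := by
  rcases h with hlam | hg
  · calc c / max (12 * L2 ^ 2) (2 * L1) ≤ c / (12 * L2 ^ 2) := by gcongr; exact le_max_left _ _
      _ ≤ 8 * |lam| ^ 3 / (12 * L2 ^ 2) := by gcongr
      _ = 2 * |lam| ^ 3 / (3 * L2 ^ 2) := by ring
      _ ≤ _ := le_max_left _ _
  · calc c / max (12 * L2 ^ 2) (2 * L1) ≤ c / (2 * L1) := by gcongr; exact le_max_right _ _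
      _ ≤ g ^ 2 / (2 * L1) := by gcongr
      _ ≤ _ := le_max_right _ _

lemma rpow_three_mul_le_of_not_and {ε α lam g : ℝ} (hε : 0 < ε) (hlam : lam ≤ 0)
    (h : ¬(lam > -ε ^ α / 2 ∧ g ≤ ε ^ (3 * α / 2))) :
    ε ^ (3 * α) ≤ 8 * |lam| ^ 3 ∨ ε ^ (3 * α) ≤ g ^ 2 := by
  rw [not_and_or, not_lt, not_le] at h
  rcases h with hcurv | hgrad
  · left
    have : ε ^ α / 2 ≤ |lam| := by rw [abs_of_nonpos hlam]; linarith
    calc ε ^ (3 * α) = 8 * (ε ^ α / 2) ^ 3 := by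
          rw [mul_comm, Real.rpow_mul hε.le]; norm_num; ring
      _ ≤ 8 * |lam| ^ 3 := by gcongr
  · right
    calc ε ^ (3 * α) = (ε ^ (3 * α / 2)) ^ 2 := by
          rw [← Real.rpow_natCast, ← Real.rpow_mul hε.le]; norm_num
      _ ≤ g ^ 2 := by gcongr

lemma exists_first_index_of_uniform_decrease {y : ℕ → ℝ} {P : ℕ → Prop} {δ Δ : ℝ} (hδ : 0 < δ)
    (hΔ : ∀ n, y 1 - y n ≤ Δ) (hdec : ∀ j, 1 ≤ j → ¬P j → y (j + 1) + δ ≤ y j) :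
    ∃ j, 1 ≤ j ∧ P j ∧ (∀ i, 1 ≤ i → i < j → ¬P i) ∧ (j : ℝ) ≤ 1 + δ⁻¹ * (y 1 - y j) := by
  have htel (n : ℕ) (hn : ∀ i, 1 ≤ i → i ≤ n → ¬P i) : y (n + 1) + n * δ ≤ y 1 := by
    induction n with
    | zero => simp
    | succ n ih =>
      have hstep := hdec (n + 1) (by omega) (hn _ (by omega) le_rfl)
      have hprev := ih fun i hi hin => hn i hi (by omega)
      push_cast
      linarith
  have hex : ∃ j, 1 ≤ j ∧ P j := by
    by_contra! hnone
    obtain ⟨n, hn⟩ := exists_nat_gt (Δ / δ)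
    have := htel n fun i hi _ => hnone i hi
    have := hΔ (n + 1)
    rw [div_lt_iff₀ hδ] at hn
    linarith
  classical
  obtain ⟨j, ⟨hj1, hjP⟩, hfirst⟩ : ∃ j, (1 ≤ j ∧ P j) ∧ ∀ i < j, ¬(1 ≤ i ∧ P i) :=
    ⟨Nat.find hex, Nat.find_spec hex, fun i => Nat.find_min hex⟩
  refine ⟨j, hj1, hjP, fun i hi hij hPi => hfirst i hij ⟨hi, hPi⟩, ?_⟩
  obtain ⟨m, rfl⟩ : ∃ m, j = m + 1 := ⟨j - 1, by omega⟩
  have := htel m fun i hi him => fun hPi => hfirst i (by omega) ⟨hi, hPi⟩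
  push_cast
  rw [add_comm, add_le_add_iff_left, le_inv_mul_iff₀ hδ]
  linarith

theorem NCG_A2_subroutine_guarantee_general {d : ℕ}
    (f : EuclideanSpace ℝ (Fin d) → ℝ) (L1 L2 α ε₁ ε₂ Δ : ℝ)
    (hL1 : 0 < L1) (hL2 : 0 < L2)
    (hε₁ : 0 < ε₁)
    (hε₂ : ε₂ = ε₁ ^ α)
    (hf : ContDiff ℝ 2 f)
    (hglip : ∀ a b : EuclideanSpace ℝ (Fin d),
      ‖gradient f a - gradient f b‖ ≤ L1 * ‖a - b‖)
    (hHlip : ∀ a b : EuclideanSpace ℝ (Fin d),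
      ‖fderiv ℝ (gradient f) a - fderiv ℝ (gradient f) b‖ ≤ L2 * ‖a - b‖)
    (x₀ : EuclideanSpace ℝ (Fin d))
    (hΔ : ∀ z : EuclideanSpace ℝ (Fin d), f x₀ - f z ≤ Δ)
    (x v : ℕ → EuclideanSpace ℝ (Fin d))
    (hx1 : x 1 = x₀)
    (hv : ∀ j : ℕ, 1 ≤ j → ‖v j‖ = 1)
    (hvneg : ∀ j : ℕ, 1 ≤ j → ⟪(fderiv ℝ (gradient f) (x j)) (v j), v j⟫ ≤ 0)
    (hmin : ∀ j : ℕ, 1 ≤ j → ∀ u : EuclideanSpace ℝ (Fin d), ‖u‖ = 1 →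
      ⟪(fderiv ℝ (gradient f) (x j)) u, u⟫ ≥
        ⟪(fderiv ℝ (gradient f) (x j)) (v j), v j⟫ -
          max ε₂ (‖gradient f (x j)‖ ^ ((2 : ℝ) / 3)) / 2)
    (hupd : ∀ j : ℕ, 1 ≤ j →
      x (j + 1) =
        if 2 * |⟪(fderiv ℝ (gradient f) (x j)) (v j), v j⟫| ^ 3 / (3 * L2 ^ 2) >
            ‖gradient f (x j)‖ ^ 2 / (2 * L1) then
          x j - ((2 * |⟪(fderiv ℝ (gradient f) (x j)) (v j), v j⟫| / L2) *
            sgn ⟪gradient f (x j), v j⟫) • v j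
        else
          x j - (1 / L1) • gradient f (x j)) :
    ∃ jstar : ℕ, 1 ≤ jstar ∧
      (⟪(fderiv ℝ (gradient f) (x jstar)) (v jstar), v jstar⟫ > -ε₂ / 2 ∧
        ‖gradient f (x jstar)‖ ≤ ε₁ ^ (3 * α / 2)) ∧
      (∀ i : ℕ, 1 ≤ i → i < jstar →
        ¬(⟪(fderiv ℝ (gradient f) (x i)) (v i), v i⟫ > -ε₂ / 2 ∧
          ‖gradient f (x i)‖ ≤ ε₁ ^ (3 * α / 2))) ∧
      (jstar : ℝ) ≤
        1 + (max (12 * L2 ^ 2) (2 * L1) / ε₁ ^ (3 * α)) * (f (x 1) - f (x jstar)) ∧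
      (jstar : ℝ) ≤ 1 + (max (12 * L2 ^ 2) (2 * L1) / ε₁ ^ (3 * α)) * Δ ∧
      ∀ u : EuclideanSpace ℝ (Fin d), ‖u‖ = 1 →
        ⟪(fderiv ℝ (gradient f) (x jstar)) u, u⟫ ≥ -ε₂ := by
  subst hε₂
  have hf1 : Differentiable ℝ f := hf.differentiable two_ne_zero
  have hg1 : Differentiable ℝ (gradient f) := (hf.gradient le_rfl).differentiable one_ne_zero
  have hc : 0 < ε₁ ^ (3 * α) := Real.rpow_pos_of_pos hε₁ _
  have hM : 0 < max (12 * L2 ^ 2) (2 * L1) := lt_max_of_lt_right (by positivity)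
  have hdec (j : ℕ) (hj : 1 ≤ j)
      (hT : ¬(⟪fderiv ℝ (gradient f) (x j) (v j), v j⟫ > -ε₁ ^ α / 2 ∧
        ‖gradient f (x j)‖ ≤ ε₁ ^ (3 * α / 2))) :
      f (x (j + 1)) + ε₁ ^ (3 * α) / max (12 * L2 ^ 2) (2 * L1) ≤ f (x j) := by
    have hstep : x (j + 1) = ncgA2Step f L1 L2 (x j) (v j) := hupd j hj
    have := apply_ncgA2Step_le hL1 hL2 hf1 hg1 hglip hHlip (hv j hj) (hvneg j hj)
    have := div_max_le_max_of_le_or_le hL1 hL2 hc.le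
      (rpow_three_mul_le_of_not_and hε₁ (hvneg j hj) hT)
    rw [hstep]
    linarith
  obtain ⟨j, hj1, hjT, hfirst, hbound⟩ := exists_first_index_of_uniform_decrease (y := fun n => f (x n))
    (div_pos hc hM) (fun n => hx1 ▸ hΔ (x n)) hdec
  rw [inv_div] at hbound
  refine ⟨j, hj1, hjT, hfirst, hbound, hbound.trans ?_, fun u hu => ?_⟩
  · gcongr
    exact hx1 ▸ hΔ (x j)
  · have hgrad : ‖gradient f (x j)‖ ^ ((2 : ℝ) / 3) ≤ ε₁ ^ α := by
      calc ‖gradient f (x j)‖ ^ ((2 : ℝ) / 3) ≤ (ε₁ ^ (3 * α / 2)) ^ ((2 : ℝ) / 3) := by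
            gcongr; exact hjT.2
        _ = ε₁ ^ α := by rw [← Real.rpow_mul hε₁.le]; ring_nf
    have := hmin j hj1 u hu
    rw [max_eq_left hgrad] at this
    linarith [hjT.1]

/-- Corollary on NCG-A2 as a subroutine of NCG-B2: running NCG-A2 with
accuracies `(ε₁^{3α/2}, 2/3)` returns a point whose Hessian has smallest eigenvalue
`≥ -ε₂` where `ε₂ = ε₁^α`. -/
theorem NCG_A2_subroutine_guarantee {d : ℕ}
    (f : EuclideanSpace ℝ (Fin d) → ℝ) (L1 L2 α ε₁ ε₂ Δ : ℝ)
    (hL1 : 0 < L1) (hL2 : 0 < L2)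
    (hα : 0 < α) (hα1 : α ≤ 1)
    (hε₁ : 0 < ε₁) (hε₁1 : ε₁ < 1)
    (hε₂ : ε₂ = ε₁ ^ α)
    (hf : ContDiff ℝ 2 f)
    (hglip : ∀ a b : EuclideanSpace ℝ (Fin d),
      ‖gradient f a - gradient f b‖ ≤ L1 * ‖a - b‖)
    (hHlip : ∀ a b : EuclideanSpace ℝ (Fin d),
      ‖fderiv ℝ (gradient f) a - fderiv ℝ (gradient f) b‖ ≤ L2 * ‖a - b‖)
    (x₀ : EuclideanSpace ℝ (Fin d))
    (hΔ : ∀ z : EuclideanSpace ℝ (Fin d), f x₀ - f z ≤ Δ)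
    (x v : ℕ → EuclideanSpace ℝ (Fin d))
    (hx1 : x 1 = x₀)
    (hv : ∀ j : ℕ, 1 ≤ j → ‖v j‖ = 1)
    (hvneg : ∀ j : ℕ, 1 ≤ j → ⟪(fderiv ℝ (gradient f) (x j)) (v j), v j⟫ ≤ 0)
    (hmin : ∀ j : ℕ, 1 ≤ j → ∀ u : EuclideanSpace ℝ (Fin d), ‖u‖ = 1 →
      ⟪(fderiv ℝ (gradient f) (x j)) u, u⟫ ≥
        ⟪(fderiv ℝ (gradient f) (x j)) (v j), v j⟫ -
          max ε₂ (‖gradient f (x j)‖ ^ ((2 : ℝ) / 3)) / 2)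
    (hupd : ∀ j : ℕ, 1 ≤ j →
      x (j + 1) =
        if 2 * |⟪(fderiv ℝ (gradient f) (x j)) (v j), v j⟫| ^ 3 / (3 * L2 ^ 2) >
            ‖gradient f (x j)‖ ^ 2 / (2 * L1) then
          x j - ((2 * |⟪(fderiv ℝ (gradient f) (x j)) (v j), v j⟫| / L2) *
            sgn ⟪gradient f (x j), v j⟫) • v j
        else
          x j - (1 / L1) • gradient f (x j)) :
    ∃ jstar : ℕ, 1 ≤ jstar ∧
      (⟪(fderiv ℝ (gradient f) (x jstar)) (v jstar), v jstar⟫ > -ε₂ / 2 ∧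
        ‖gradient f (x jstar)‖ ≤ ε₁ ^ (3 * α / 2)) ∧
      (∀ i : ℕ, 1 ≤ i → i < jstar →
        ¬(⟪(fderiv ℝ (gradient f) (x i)) (v i), v i⟫ > -ε₂ / 2 ∧
          ‖gradient f (x i)‖ ≤ ε₁ ^ (3 * α / 2))) ∧
      (jstar : ℝ) ≤
        1 + (max (12 * L2 ^ 2) (2 * L1) / ε₁ ^ (3 * α)) * (f (x 1) - f (x jstar)) ∧
      (jstar : ℝ) ≤ 1 + (max (12 * L2 ^ 2) (2 * L1) / ε₁ ^ (3 * α)) * Δ ∧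
      ∀ u : EuclideanSpace ℝ (Fin d), ‖u‖ = 1 →
        ⟪(fderiv ℝ (gradient f) (x jstar)) u, u⟫ ≥ -ε₂ :=
  NCG_A2_subroutine_guarantee_general f L1 L2 α ε₁ ε₂ Δ hL1 hL2 hε₁ hε₂ hf hglip hHlip x₀ hΔ x v hx1
    hv hvneg hmin hupd
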